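/- arXiv:1411.4907 — 2 statements merged into one kernel-verified Lean document; each statement's English description precedes it below -/
import Mathlib

section
/- For every t > 0, ∫₀ᵗ (1/(2π(t−s))) · ( ∫_ℝ (2πs)^{−1/2} exp(−y²/(2s)) · exp(−y²/(t−s)) dy ) ds = 1/4. -/
open MeasureTheory Real Set

/-! The `y`-integral is Gaussian: multiplying the two exponentials adds the precisions
`1/(2s)` and `1/(t-s)`, and after the prefactors the integrand in `s` becomes
`(2π)⁻¹ (t² - s²)^{-1/2}`. Its primitive is `(2π)⁻¹ arcsin (s / t)`, which increases by
`(2π)⁻¹ · π/2 = 1/4` on `[0, t]`. -/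

theorem integral_exp_neg_sq_div_mul_exp_neg_sq_div (a b : ℝ) :
    ∫ y : ℝ, exp (-y ^ 2 / a) * exp (-y ^ 2 / b) = √(π / (a⁻¹ + b⁻¹)) := by
  rw [← integral_gaussian]
  congr 1 with y
  rw [← exp_add]
  ring_nf

theorem hasDerivAt_arcsin_div {r x : ℝ} (hr : 0 < r) (h₁ : -r < x) (h₂ : x < r) :
    HasDerivAt (fun x => arcsin (x / r)) (√(r ^ 2 - x ^ 2))⁻¹ x := by
  have hx₁ : x / r ≠ -1 := by
    rw [ne_eq, div_eq_iff hr.ne']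
    linarith
  have hx₂ : x / r ≠ 1 := by
    rw [ne_eq, div_eq_iff hr.ne']
    linarith
  refine ((hasDerivAt_arcsin hx₁ hx₂).comp x ((hasDerivAt_id' x).div_const r)).congr_deriv ?_
  rw [show 1 - (x / r) ^ 2 = (r ^ 2 - x ^ 2) / r ^ 2 by field_simp, sqrt_div' _ (sq_nonneg r),
    sqrt_sq hr.le]
  field_simp

theorem integral_inv_sqrt_sq_sub_sq {r a b : ℝ} (hr : 0 < r) (ha : -r ≤ a) (hab : a ≤ b)
    (hb : b ≤ r) :
    ∫ x in a..b, (√(r ^ 2 - x ^ 2))⁻¹ = arcsin (b / r) - arcsin (a / r) := by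
  have hcont : ContinuousOn (fun x => arcsin (x / r)) (Icc a b) := by fun_prop
  have hderiv : ∀ x ∈ Ioo a b, HasDerivAt (fun x => arcsin (x / r)) (√(r ^ 2 - x ^ 2))⁻¹ x :=
    fun x hx => hasDerivAt_arcsin_div hr (by linarith [hx.1]) (by linarith [hx.2])
  refine intervalIntegral.integral_eq_sub_of_hasDerivAt_of_le hab hcont hderiv ?_
  exact (intervalIntegrable_iff_integrableOn_Ioc_of_le hab).2
    (intervalIntegral.integrableOn_deriv_of_nonneg hcont hderiv fun x _ => by positivity)

theorem annealed_variance_integrand_eq {s t : ℝ} (hs : 0 < s) (hst : s < t) :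
    1 / (2 * π * (t - s)) *
        ∫ y : ℝ, (2 * π * s) ^ (-(1:ℝ) / 2) * exp (-y ^ 2 / (2 * s)) * exp (-y ^ 2 / (t - s))
      = (2 * π)⁻¹ * (√(t ^ 2 - s ^ 2))⁻¹ := by
  have hinner : ∫ y : ℝ, (2 * π * s) ^ (-(1:ℝ) / 2) * exp (-y ^ 2 / (2 * s)) *
        exp (-y ^ 2 / (t - s)) = (√(2 * π * s))⁻¹ * √(π / ((2 * s)⁻¹ + (t - s)⁻¹)) := by
    rw [← integral_exp_neg_sq_div_mul_exp_neg_sq_div, ← integral_const_mul, sqrt_eq_rpow,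
      ← rpow_neg (by positivity)]
    simp_rw [mul_assoc]
    norm_num
  have hts : 0 < t - s := by linarith
  have hdisc : 0 < t ^ 2 - s ^ 2 := by nlinarith
  have hvar : π / ((2 * s)⁻¹ + (t - s)⁻¹) = 2 * π * s * ((t - s) ^ 2 / (t ^ 2 - s ^ 2)) := by
    field_simp
    ring
  rw [hinner, hvar, sqrt_mul (x := 2 * π * s) (by positivity), sqrt_div' _ hdisc.le,
    sqrt_sq hts.le]
  have : 0 < √(t ^ 2 - s ^ 2) := sqrt_pos.2 hdisc
  field_simp

/-- The annealed variance of the catalytic O-U process in dimension one at `x = 0`: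
`∫₀ᵗ (1/(2π(t−s))) (∫_ℝ (2πs)^{−1/2} exp(−y²/(2s)) exp(−y²/(t−s)) dy) ds = 1/4`. -/
theorem annealed_variance_at_zero (t : ℝ) (ht : 0 < t) :
    ∫ s in (0:ℝ)..t,
        (1 / (2 * Real.pi * (t - s))) *
          ∫ y : ℝ, (2 * Real.pi * s) ^ (-(1:ℝ) / 2) * Real.exp (-y ^ 2 / (2 * s)) *
            Real.exp (-y ^ 2 / (t - s))
      = 1 / 4 := by
  calc _ = ∫ s in (0:ℝ)..t, (2 * π)⁻¹ * (√(t ^ 2 - s ^ 2))⁻¹ :=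
        intervalIntegral.integral_congr_Ioo_of_le ht.le fun s hs =>
          annealed_variance_integrand_eq hs.1 hs.2
    _ = (2 * π)⁻¹ * (arcsin (t / t) - arcsin (0 / t)) := by
        rw [intervalIntegral.integral_const_mul,
          integral_inv_sqrt_sq_sub_sq ht (by linarith) ht.le le_rfl]
    _ = 1 / 4 := by
        rw [div_self ht.ne', zero_div, arcsin_one, arcsin_zero]
        field_simp
        ring
end

section
/- For every t > 0 and every x ∈ ℝ, the integral ∫₀ᵗ (1/(2π(t−s))) · ( ∫_ℝ (2πs)^{−1/2} exp(−(y−x)²/(t−s)) · exp(−y²/(2s)) dy ) ds is finite; in fact it is bounded above by C·∫₀ᵗ (s(t−s))^{−1/2} ds for some constant C > 0 independent of x and t. -/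
open MeasureTheory Real

lemma key_coeff_bound {a b : ℝ} (ha : 0 < a) (hb : 0 < b) :
    (1 / (2 * Real.pi * b)) * ((2 * Real.pi * a) ^ (-(1:ℝ) / 2) * Real.sqrt (Real.pi / b⁻¹)) ≤
      (a * b) ^ (-(1:ℝ) / 2) := by
  have hpi := Real.pi_gt_three
  have hpi4 : Real.pi < 4 := by linarith [Real.pi_lt_d2]
  have h2pi : (1:ℝ) ≤ 2 * Real.pi := by linarith
  rw [show Real.pi / b⁻¹ = Real.pi * b by field_simp]
  have hab : (a * b) ^ (-(1:ℝ) / 2) = a ^ (-(1:ℝ)/2) * b ^ (-(1:ℝ)/2) :=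
    Real.mul_rpow ha.le hb.le
  have h2a : (2 * Real.pi * a) ^ (-(1:ℝ) / 2) = (2 * Real.pi) ^ (-(1:ℝ)/2) * a ^ (-(1:ℝ)/2) :=
    Real.mul_rpow (by positivity) ha.le
  have hsq : Real.sqrt (Real.pi * b) = Real.sqrt Real.pi * Real.sqrt b :=
    Real.sqrt_mul Real.pi_pos.le b
  have hbneg : b ^ (-(1:ℝ)/2) = Real.sqrt b / b := by
    have h : Real.sqrt b * Real.sqrt b = b := Real.mul_self_sqrt hb.le
    have hs : (0:ℝ) < Real.sqrt b := Real.sqrt_pos.mpr hb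
    rw [show (-(1:ℝ)/2) = -(1/2:ℝ) by norm_num, Real.rpow_neg hb.le, ← Real.sqrt_eq_rpow]
    rw [eq_div_iff hb.ne', inv_mul_eq_div, div_eq_iff hs.ne']
    linarith
  rw [hab, h2a, hsq, hbneg]
  have hc1 : (2 * Real.pi) ^ (-(1:ℝ)/2) ≤ 1 :=
    Real.rpow_le_one_of_one_le_of_nonpos h2pi (by norm_num)
  have hc1' : (0:ℝ) ≤ (2 * Real.pi) ^ (-(1:ℝ)/2) := Real.rpow_nonneg (by positivity) _
  have hc2 : Real.sqrt Real.pi ≤ 2 := by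
    rw [show (2:ℝ) = Real.sqrt 4 by rw [show (4:ℝ) = 2^2 by norm_num, Real.sqrt_sq]; norm_num]
    exact Real.sqrt_le_sqrt (by linarith)
  have hc2' : (0:ℝ) ≤ Real.sqrt Real.pi := Real.sqrt_nonneg _
  have ha2 : (0:ℝ) ≤ a ^ (-(1:ℝ)/2) := Real.rpow_nonneg ha.le _
  have hsb : (0:ℝ) ≤ Real.sqrt b := Real.sqrt_nonneg _
  -- reduce to coefficient inequality
  have hcoeff : (1 / (2 * Real.pi * b)) * ((2 * Real.pi) ^ (-(1:ℝ)/2) * Real.sqrt Real.pi)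
      ≤ 1 / b := by
    have hX : (2 * Real.pi) ^ (-(1:ℝ)/2) * Real.sqrt Real.pi ≤ 2 := by
      nlinarith
    rw [div_mul_eq_mul_div, div_le_div_iff₀ (by positivity) hb]
    nlinarith
  calc 1 / (2 * Real.pi * b) *
        ((2 * Real.pi) ^ (-(1:ℝ)/2) * a ^ (-(1:ℝ)/2) * (Real.sqrt Real.pi * Real.sqrt b))
      = (1 / (2 * Real.pi * b) * ((2 * Real.pi) ^ (-(1:ℝ)/2) * Real.sqrt Real.pi)) *
          (a ^ (-(1:ℝ)/2) * Real.sqrt b) := by ring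
    _ ≤ (1 / b) * (a ^ (-(1:ℝ)/2) * Real.sqrt b) := by
        exact mul_le_mul_of_nonneg_right hcoeff (by positivity)
    _ = a ^ (-(1:ℝ)/2) * (Real.sqrt b / b) := by ring

lemma integrableOn_aux {t : ℝ} (ht : 0 < t) :
    IntegrableOn (fun s : ℝ => s ^ (-(1:ℝ)/2) * (t - s) ^ (-(1:ℝ)/2)) (Set.Ioo 0 t) := by
  have hmeas : Measurable (fun s : ℝ => s ^ (-(1:ℝ)/2) * (t - s) ^ (-(1:ℝ)/2)) := by
    fun_prop
  have h1 : IntegrableOn (fun s : ℝ => s ^ (-(1:ℝ)/2)) (Set.Ioc 0 (t/2)) := by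
    rw [← intervalIntegrable_iff_integrableOn_Ioc_of_le (by linarith)]
    exact intervalIntegral.intervalIntegrable_rpow' (by norm_num)
  have h2 : IntegrableOn (fun s : ℝ => (t - s) ^ (-(1:ℝ)/2)) (Set.Ioc (t/2) t) := by
    rw [← intervalIntegrable_iff_integrableOn_Ioc_of_le (by linarith)]
    have h := (intervalIntegral.intervalIntegrable_rpow' (r := -(1:ℝ)/2) (by norm_num)
      (a := 0) (b := t/2)).comp_sub_left t
    rw [sub_zero, show t - t/2 = t/2 by ring] at h
    exact h.symm
  have hA : IntegrableOn (fun s : ℝ => s ^ (-(1:ℝ)/2) * (t - s) ^ (-(1:ℝ)/2))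
      (Set.Ioc 0 (t/2)) := by
    refine Integrable.mono' (h1.const_mul ((t/2) ^ (-(1:ℝ)/2)))
      (hmeas.aestronglyMeasurable.restrict) ?_
    rw [ae_restrict_iff' measurableSet_Ioc]
    filter_upwards with s hs
    have hs1 : 0 < s := hs.1
    have hs2 : t/2 ≤ t - s := by linarith [hs.2]
    have hts : (0:ℝ) < t - s := by linarith
    rw [Real.norm_eq_abs, abs_of_nonneg (by positivity)]
    rw [mul_comm ((t/2) ^ (-(1:ℝ)/2))]
    exact mul_le_mul_of_nonneg_left
      (Real.rpow_le_rpow_of_nonpos (by linarith) hs2 (by norm_num))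
      (Real.rpow_nonneg hs1.le _)
  have hB : IntegrableOn (fun s : ℝ => s ^ (-(1:ℝ)/2) * (t - s) ^ (-(1:ℝ)/2))
      (Set.Ioc (t/2) t) := by
    refine Integrable.mono' (h2.const_mul ((t/2) ^ (-(1:ℝ)/2)))
      (hmeas.aestronglyMeasurable.restrict) ?_
    rw [ae_restrict_iff' measurableSet_Ioc]
    filter_upwards with s hs
    have hs1 : t/2 ≤ s := hs.1.le
    have hs0 : (0:ℝ) < s := by linarith
    have hts : (0:ℝ) ≤ t - s := by linarith [hs.2]
    rw [Real.norm_eq_abs, abs_of_nonneg (by positivity)]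
    exact mul_le_mul_of_nonneg_right
      (Real.rpow_le_rpow_of_nonpos (by linarith) hs1 (by norm_num))
      (Real.rpow_nonneg hts _)
  exact (hA.union hB).mono_set (by
    rw [Set.Ioc_union_Ioc_eq_Ioc (by linarith) (by linarith)]
    exact Set.Ioo_subset_Ioc_self)

/-- The annealed variance of the catalytic O-U process in dimension one at a point `x`
is finite; in fact it is bounded by `C · ∫₀ᵗ (s(t−s))^{−1/2} ds` for a constant `C > 0`
independent of `x` and `t`. -/
theorem annealed_variance_finite :
    ∃ C : ℝ, 0 < C ∧ ∀ t : ℝ, 0 < t → ∀ x : ℝ,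
      (∫⁻ s in Set.Ioo (0:ℝ) t,
          ENNReal.ofReal ((1 / (2 * Real.pi * (t - s))) *
            ∫ y : ℝ, (2 * Real.pi * s) ^ (-(1:ℝ) / 2) *
              Real.exp (-(y - x) ^ 2 / (t - s)) * Real.exp (-y ^ 2 / (2 * s))))
        ≤ ENNReal.ofReal (C * ∫ s in (0:ℝ)..t, (s * (t - s)) ^ (-(1:ℝ) / 2)) := by
  refine ⟨1, one_pos, fun t ht x => ?_⟩
  set g : ℝ → ℝ := fun s => (s * (t - s)) ^ (-(1:ℝ)/2) with hg_def
  -- integrability of g on Ioo 0 t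
  have hgint : IntegrableOn g (Set.Ioo 0 t) := by
    refine (integrableOn_aux ht).congr_fun ?_ measurableSet_Ioo
    intro s hs
    exact (Real.mul_rpow hs.1.le (by linarith [hs.2] : (0:ℝ) ≤ t - s)).symm
  -- pointwise bound on Ioo
  have hbound : ∀ s ∈ Set.Ioo (0:ℝ) t,
      (1 / (2 * Real.pi * (t - s))) *
        (∫ y : ℝ, (2 * Real.pi * s) ^ (-(1:ℝ) / 2) *
          Real.exp (-(y - x) ^ 2 / (t - s)) * Real.exp (-y ^ 2 / (2 * s))) ≤ g s := by
    intro s hs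
    have hs0 : 0 < s := hs.1
    have hts : 0 < t - s := by linarith [hs.2]
    have hb : 0 < (t - s)⁻¹ := inv_pos.mpr hts
    have hinner : (∫ y : ℝ, (2 * Real.pi * s) ^ (-(1:ℝ) / 2) *
          Real.exp (-(y - x) ^ 2 / (t - s)) * Real.exp (-y ^ 2 / (2 * s)))
        ≤ (2 * Real.pi * s) ^ (-(1:ℝ) / 2) * Real.sqrt (Real.pi / (t - s)⁻¹) := by
      have hInt : Integrable (fun y : ℝ =>
          (2 * Real.pi * s) ^ (-(1:ℝ) / 2) * Real.exp (-(t - s)⁻¹ * (y - x) ^ 2)) := by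
        exact ((integrable_exp_neg_mul_sq hb).comp_sub_right x).const_mul _
      have hmono : (∫ y : ℝ, (2 * Real.pi * s) ^ (-(1:ℝ) / 2) *
            Real.exp (-(y - x) ^ 2 / (t - s)) * Real.exp (-y ^ 2 / (2 * s)))
          ≤ ∫ y : ℝ, (2 * Real.pi * s) ^ (-(1:ℝ) / 2) *
            Real.exp (-(t - s)⁻¹ * (y - x) ^ 2) := by
        refine integral_mono_of_nonneg (Filter.Eventually.of_forall fun y => by positivity)
          hInt (Filter.Eventually.of_forall fun y => ?_)
        dsimp only
        have hexp : -(y - x) ^ 2 / (t - s) = -(t - s)⁻¹ * (y - x) ^ 2 := by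
          field_simp
        rw [hexp, mul_assoc]
        refine mul_le_mul_of_nonneg_left ?_ (Real.rpow_nonneg (by positivity) _)
        have h1 : Real.exp (-y ^ 2 / (2 * s)) ≤ 1 := by
          rw [Real.exp_le_one_iff]
          have : (0:ℝ) ≤ y ^ 2 / (2 * s) := by positivity
          rw [neg_div]; linarith
        calc Real.exp (-(t - s)⁻¹ * (y - x) ^ 2) * Real.exp (-y ^ 2 / (2 * s))
            ≤ Real.exp (-(t - s)⁻¹ * (y - x) ^ 2) * 1 :=
              mul_le_mul_of_nonneg_left h1 (Real.exp_nonneg _)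
          _ = Real.exp (-(t - s)⁻¹ * (y - x) ^ 2) := mul_one _
      have hgauss : (∫ y : ℝ, (2 * Real.pi * s) ^ (-(1:ℝ) / 2) *
            Real.exp (-(t - s)⁻¹ * (y - x) ^ 2))
          = (2 * Real.pi * s) ^ (-(1:ℝ) / 2) * Real.sqrt (Real.pi / (t - s)⁻¹) := by
        rw [MeasureTheory.integral_const_mul]
        congr 1
        rw [integral_sub_right_eq_self (μ := volume)
          (fun y : ℝ => Real.exp (-(t - s)⁻¹ * y ^ 2)) x]
        exact integral_gaussian _
      exact hmono.trans_eq hgauss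
    have := mul_le_mul_of_nonneg_left hinner
      (le_of_lt (by positivity : (0:ℝ) < 1 / (2 * Real.pi * (t - s))))
    exact this.trans (key_coeff_bound hs0 hts)
  -- conclude
  calc (∫⁻ s in Set.Ioo (0:ℝ) t,
          ENNReal.ofReal ((1 / (2 * Real.pi * (t - s))) *
            ∫ y : ℝ, (2 * Real.pi * s) ^ (-(1:ℝ) / 2) *
              Real.exp (-(y - x) ^ 2 / (t - s)) * Real.exp (-y ^ 2 / (2 * s))))
      ≤ ∫⁻ s in Set.Ioo (0:ℝ) t, ENNReal.ofReal (g s) := by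
        refine lintegral_mono_ae ?_
        rw [ae_restrict_iff' measurableSet_Ioo]
        filter_upwards with s hs
        exact ENNReal.ofReal_le_ofReal (hbound s hs)
    _ = ENNReal.ofReal (∫ s in Set.Ioo (0:ℝ) t, g s) := by
        refine (ofReal_integral_eq_lintegral_ofReal hgint ?_).symm
        filter_upwards [ae_restrict_mem measurableSet_Ioo] with s hs
        have : (0:ℝ) ≤ s * (t - s) := by nlinarith [hs.1, hs.2]
        exact Real.rpow_nonneg this _
    _ = ENNReal.ofReal (1 * ∫ s in (0:ℝ)..t, (s * (t - s)) ^ (-(1:ℝ) / 2)) := by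
        rw [one_mul, intervalIntegral.integral_of_le ht.le,
          ← MeasureTheory.integral_Ioc_eq_integral_Ioo]
end
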